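/- arXiv:1611.07499 — 2 statements merged into one kernel-verified Lean document; each statement's English description precedes it below -/
import Mathlib

section
/- Let k > 0, ν > −k, and c ∈ ℝ. Then for all x > 0, d/dx ( x^{−ν/k} W^k_{ν,c}(x) ) = −c · x^{−ν/k} W^k_{ν+k,c}(x). -/
open Real

/-- The k-gamma function, `Γ_k(x) = k^(x/k - 1) * Γ(x/k)`. -/
noncomputable def kGamma (k x : ℝ) : ℝ := k ^ (x / k - 1) * Real.Gamma (x / k)

/-- The generalized k-Bessel function `W^k_{ν,c}(x)`. -/
noncomputable def kBesselW (k ν c x : ℝ) : ℝ :=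
  ∑' r : ℕ, (-c) ^ r / (kGamma k (r * k + ν + k) * (r.factorial : ℝ)) *
    (x / 2) ^ (2 * (r : ℝ) + ν / k)

/-!
Writing `x^{-ν/k} W^k_{ν,c}(x) = 2^{-ν/k} F_ν((x/2)^2)` with the entire series
`F_ν(z) = ∑ (-c)^r z^r / (Γ_k(rk + ν + k) r!)`, the claim reduces to `F_ν' = -c F_{ν+k}`.
Differentiating termwise, the `(r+1)`-st coefficient of `F_ν` times `r+1` is `-c` times the
`r`-th coefficient of `F_{ν+k}`, because `Γ_k((r+1)k + ν + k) = Γ_k(rk + (ν+k) + k)` literally.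
Termwise differentiation is justified since `Γ_k(x) ≥ k^{x/k-1}` once `x ≥ 2k`, so the
coefficients decay like `(|c|/k)^r / r!`.
-/

theorem Real.one_le_Gamma {t : ℝ} (ht : 2 ≤ t) : 1 ≤ Gamma t :=
  Gamma_two ▸ Gamma_strictMonoOn_Ici.monotoneOn (Set.mem_Ici.2 le_rfl) (Set.mem_Ici.2 ht) ht

theorem rpow_le_kGamma {k x : ℝ} (hk : 0 < k) (hx : 2 * k ≤ x) : k ^ (x / k - 1) ≤ kGamma k x :=
  le_mul_of_one_le_right (rpow_nonneg hk.le _) (one_le_Gamma ((le_div_iff₀ hk).2 hx))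

theorem summable_abs_mul_nat_mul_pow_pred {a : ℕ → ℝ} (ha : ∀ R, Summable fun n => |a n| * R ^ n)
    {R : ℝ} (hR : 1 ≤ R) : Summable fun n => |a n| * n * R ^ (n - 1) := by
  refine (ha (2 * R)).of_nonneg_of_le (fun n => by positivity) fun n => ?_
  rw [mul_assoc, mul_pow]
  gcongr
  · exact_mod_cast (Nat.lt_two_pow_self).le
  · omega

theorem hasDerivAt_tsum_mul_pow {a : ℕ → ℝ} (ha : ∀ R, Summable fun n => |a n| * R ^ n) (z : ℝ) :
    HasDerivAt (fun w => ∑' n, a n * w ^ n) (∑' n, (n + 1) * a (n + 1) * z ^ n) z := by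
  set R := |z| + 1
  have hbound : ∀ n, ∀ y ∈ Metric.ball (0 : ℝ) R,
      ‖a n * (n * y ^ (n - 1))‖ ≤ |a n| * n * R ^ (n - 1) := by
    intro n y hy
    rw [mem_ball_zero_iff] at hy
    rw [norm_mul, norm_mul, norm_pow, Real.norm_natCast, Real.norm_eq_abs, ← mul_assoc]
    gcongr
  have hu := summable_abs_mul_nat_mul_pow_pred ha (le_add_of_nonneg_left (abs_nonneg z))
  have hz : z ∈ Metric.ball (0 : ℝ) R := by simp [R]
  have hsum0 : Summable fun n => a n * (0 : ℝ) ^ n :=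
    summable_of_ne_finset_zero (s := {0}) fun n hn => by simp_all
  have hderiv := hasDerivAt_tsum_of_isPreconnected hu Metric.isOpen_ball
    (convex_ball (0 : ℝ) R).isPreconnected (fun n y _ => (hasDerivAt_pow n y).const_mul (a n))
    hbound (Metric.mem_ball_self (by positivity)) hsum0 hz
  rw [(hu.of_norm_bounded fun n => hbound n z hz).tsum_eq_zero_add] at hderiv
  refine hderiv.congr_deriv ?_
  simp only [CharP.cast_eq_zero, zero_mul, mul_zero, zero_add, Nat.cast_add, Nat.cast_one,
    Nat.add_sub_cancel]
  exact tsum_congr fun n => by ring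

theorem rpow_neg_mul_half_rpow {y : ℝ} (hy : 0 < y) (a : ℝ) :
    y ^ (-a) * (y / 2) ^ a = 2 ^ (-a) := by
  rw [div_rpow hy.le zero_le_two, rpow_neg hy.le, rpow_neg zero_le_two]
  have : 0 < y ^ a := rpow_pos_of_pos hy a
  field_simp

section KBessel

variable {k ν c : ℝ}

noncomputable def kBesselCoeff (k ν c : ℝ) (r : ℕ) : ℝ :=
  (-c) ^ r / (kGamma k (r * k + ν + k) * (r.factorial : ℝ))

noncomputable def kBesselSeries (k ν c z : ℝ) : ℝ :=
  ∑' r : ℕ, kBesselCoeff k ν c r * z ^ r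

theorem kBesselW_eq_rpow_mul_kBesselSeries {x : ℝ} (hx : 0 < x) :
    kBesselW k ν c x = (x / 2) ^ (ν / k) * kBesselSeries k ν c ((x / 2) ^ 2) := by
  rw [kBesselW, kBesselSeries, ← tsum_mul_left]
  refine tsum_congr fun r => ?_
  have hx2 : 0 < x / 2 := by positivity
  rw [rpow_add hx2, rpow_mul hx2.le, rpow_two, rpow_natCast, kBesselCoeff]
  ring

theorem kBesselCoeff_succ_mul (r : ℕ) :
    kBesselCoeff k ν c (r + 1) * (r + 1) = -c * kBesselCoeff k (ν + k) c r := by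
  have hG : kGamma k ((r + 1 : ℕ) * k + ν + k) = kGamma k (r * k + (ν + k) + k) := by
    push_cast; ring_nf
  rw [kBesselCoeff, kBesselCoeff, hG, Nat.factorial_succ, pow_succ]
  rcases eq_or_ne (kGamma k (r * k + (ν + k) + k)) 0 with h | h
  · simp [h]
  · push_cast
    field_simp

theorem abs_kBesselCoeff_le (hk : 0 < k) :
    ∀ᶠ r : ℕ in Filter.atTop,
      |kBesselCoeff k ν c r| ≤ (k ^ (ν / k))⁻¹ * (|c| / k) ^ r / r.factorial := by
  filter_upwards [tendsto_natCast_atTop_atTop.eventually_ge_atTop ((k - ν) / k)] with r hr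
  rw [div_le_iff₀ hk] at hr
  have hpow : k ^ ((r * k + ν + k) / k - 1) = k ^ r * k ^ (ν / k) := by
    rw [← rpow_natCast, ← rpow_add hk]
    congr 1
    field_simp
    ring
  have hG := rpow_le_kGamma hk (x := r * k + ν + k) (by linarith)
  rw [hpow] at hG
  rw [kBesselCoeff, abs_div, abs_mul, abs_pow, abs_neg, Nat.abs_cast,
    abs_of_pos (hG.trans_lt' (by positivity)), div_pow]
  calc |c| ^ r / (kGamma k (r * k + ν + k) * r.factorial)
      ≤ |c| ^ r / (k ^ r * k ^ (ν / k) * r.factorial) := by gcongr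
    _ = (k ^ (ν / k))⁻¹ * (|c| ^ r / k ^ r) / r.factorial := by field_simp

theorem summable_abs_kBesselCoeff_mul_pow (hk : 0 < k) (R : ℝ) :
    Summable fun r => |kBesselCoeff k ν c r| * R ^ r := by
  refine Summable.of_norm_bounded_eventually_nat
    ((summable_pow_div_factorial (|c| / k * |R|)).mul_left (k ^ (ν / k))⁻¹) ?_
  filter_upwards [abs_kBesselCoeff_le hk] with r hr
  rw [norm_mul, norm_pow, Real.norm_eq_abs, abs_abs, mul_pow, ← mul_div_assoc]
  calc |kBesselCoeff k ν c r| * |R| ^ r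
      ≤ (k ^ (ν / k))⁻¹ * (|c| / k) ^ r / r.factorial * |R| ^ r := by gcongr
    _ = _ := by ring

theorem hasDerivAt_kBesselSeries (hk : 0 < k) (z : ℝ) :
    HasDerivAt (kBesselSeries k ν c) (-c * kBesselSeries k (ν + k) c z) z := by
  have h := hasDerivAt_tsum_mul_pow (summable_abs_kBesselCoeff_mul_pow (ν := ν) (c := c) hk) z
  refine h.congr_deriv ?_
  rw [kBesselSeries, ← tsum_mul_left]
  exact tsum_congr fun r => by
    rw [mul_comm _ (kBesselCoeff _ _ _ _), kBesselCoeff_succ_mul]; ring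

end KBessel

theorem kBessel_deriv_mul_rpow_neg_general (k ν c : ℝ) (hk : 0 < k) (x : ℝ)
    (hx : 0 < x) :
    deriv (fun y : ℝ => y ^ (-(ν / k)) * kBesselW k ν c y) x =
      -c * x ^ (-(ν / k)) * kBesselW k (ν + k) c x := by
  have hF : (fun y : ℝ => y ^ (-(ν / k)) * kBesselW k ν c y) =ᶠ[nhds x]
      fun y => 2 ^ (-(ν / k)) * kBesselSeries k ν c ((y / 2) ^ 2) := by
    filter_upwards [Ioi_mem_nhds hx] with y hy
    rw [kBesselW_eq_rpow_mul_kBesselSeries hy, ← mul_assoc, rpow_neg_mul_half_rpow hy]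
  have hsq : HasDerivAt (fun y : ℝ => (y / 2) ^ 2) (x / 2) x := by
    refine (((hasDerivAt_id' x).div_const 2).pow 2).congr_deriv ?_
    push_cast
    ring
  have hderiv : HasDerivAt (fun y => 2 ^ (-(ν / k)) * kBesselSeries k ν c ((y / 2) ^ 2))
      (2 ^ (-(ν / k)) * (-c * kBesselSeries k (ν + k) c ((x / 2) ^ 2) * (x / 2))) x :=
    ((hasDerivAt_kBesselSeries hk _).comp x hsq).const_mul _
  rw [(hderiv.congr_of_eventuallyEq hF).deriv, kBesselW_eq_rpow_mul_kBesselSeries hx,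
    show (ν + k) / k = ν / k + 1 by field_simp, rpow_add_one (by positivity),
    ← rpow_neg_mul_half_rpow hx]
  ring

theorem kBessel_deriv_mul_rpow_neg (k ν c : ℝ) (hk : 0 < k) (hν : -k < ν) (x : ℝ)
    (hx : 0 < x) :
    deriv (fun y : ℝ => y ^ (-(ν / k)) * kBesselW k ν c y) x =
      -c * x ^ (-(ν / k)) * kBesselW k (ν + k) c x :=
  kBessel_deriv_mul_rpow_neg_general k ν c hk x hx
end

section
/- Let k > 0, c ∈ ℝ, m a positive natural number, and ν > (m−1)k. Then for all x > 0, the m-th derivative of the generalized k-Bessel function satisfies d^m/dx^m W^k_{ν,c}(x) = (1/(2^m k^m)) Σ_{n=0}^m (−1)^n · binom(m,n) · c^n k^n · W^k_{ν − mk + 2nk, c}(x). -/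
/-!
Differentiating the series term by term (on `(x/2, 2x)` the terms and their derivatives are
dominated by `C^r / (Γ_k(r k + ν + k) r!)`, which is summable by the ratio test) and using
`Γ_k(x + k) = x Γ_k(x)` gives `W_ν' = (W_{ν-k} - c k W_{ν+k}) / (2k)` for `ν > 0`. Iterating this
`m` times, Pascal's rule collects the coefficients into `binom(m, n) (-c k)^n`.
-/

open Real

open Filter Finset Nat

lemma rpow_two_mul_natCast_add {y : ℝ} (hy : 0 < y) (r : ℕ) (e : ℝ) :
    y ^ (2 * (r : ℝ) + e) = (y ^ 2) ^ r * y ^ e := by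
  rw [rpow_add hy, ← pow_mul, ← rpow_natCast]
  push_cast
  ring_nf

lemma rpow_le_rpow_add_rpow {lo hi y : ℝ} (hlo : 0 < lo) (hy : y ∈ Set.Icc lo hi) (e : ℝ) :
    y ^ e ≤ lo ^ e + hi ^ e := by
  rcases le_total 0 e with he | he
  · linarith [rpow_le_rpow (hlo.trans_le hy.1).le hy.2 he, rpow_pos_of_pos hlo e]
  · linarith [rpow_le_rpow_of_nonpos hlo hy.1 he,
      rpow_pos_of_pos (hlo.trans_le (hy.1.trans hy.2)) e]

lemma abs_two_mul_natCast_add_le (r : ℕ) (s : ℝ) : |2 * (r : ℝ) + s| ≤ 3 ^ r * (|s| + 1) := by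
  have hbernoulli : 1 + r * (2 : ℝ) ≤ (1 + 2) ^ r :=
    one_add_le_pow_of_two_add_nonneg (by norm_num) r
  have h3 : (1 : ℝ) ≤ 3 ^ r := one_le_pow₀ (by norm_num)
  calc |2 * (r : ℝ) + s| ≤ 2 * r + |s| := by
        simpa [abs_of_nonneg (by positivity : (0 : ℝ) ≤ 2 * r)] using abs_add_le (2 * (r : ℝ)) s
    _ ≤ 3 ^ r * (|s| + 1) := by
        norm_num at hbernoulli
        nlinarith [mul_le_mul_of_nonneg_right h3 (abs_nonneg s)]

lemma sum_choose_mul_neg_pow_mul_sub {R : Type*} [CommRing R] (a : R) (F : ℕ → R) (m : ℕ) :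
    ∑ n ∈ range (m + 1), (m.choose n : R) * (-a) ^ n * (F n - a * F (n + 1)) =
      ∑ n ∈ range (m + 2), ((m + 1).choose n : R) * (-a) ^ n * F n := by
  have hpascal := sum_choose_succ_mul (fun i _ => (-a) ^ i * F i) m
  simp only [← mul_assoc] at hpascal
  rw [hpascal, ← sum_add_distrib]
  refine sum_congr rfl fun n _ => ?_
  ring

lemma kGamma_pos {k x : ℝ} (hk : 0 < k) (hx : 0 < x) : 0 < kGamma k x :=
  mul_pos (rpow_pos_of_pos hk _) (Gamma_pos_of_pos (div_pos hx hk))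

lemma kGamma_add_self {k x : ℝ} (hk : 0 < k) (hx : x ≠ 0) :
    kGamma k (x + k) = x * kGamma k x := by
  have hxk : (x + k) / k = x / k + 1 := by field_simp
  rw [kGamma, kGamma, hxk, Gamma_add_one (div_ne_zero hx hk.ne'), add_sub_cancel_right,
    rpow_sub hk, rpow_one]
  field_simp

noncomputable def kBesselTerm (k ν c : ℝ) (r : ℕ) (x : ℝ) : ℝ :=
  (-c) ^ r / (kGamma k (r * k + ν + k) * r !) * (x / 2) ^ (2 * (r : ℝ) + ν / k)

noncomputable def kBesselTermDeriv (k ν c : ℝ) (r : ℕ) (x : ℝ) : ℝ :=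
  (-c) ^ r / (kGamma k (r * k + ν + k) * r !) *
    ((2 * r + ν / k) / 2 * (x / 2) ^ (2 * (r : ℝ) + ν / k - 1))

section

variable {k ν c : ℝ}

lemma natCast_mul_add_add_pos (hk : 0 < k) (hν : -k < ν) (r : ℕ) : 0 < r * k + ν + k := by
  have : (0 : ℝ) ≤ r * k := by positivity
  linarith

lemma kGamma_natCast_succ_mul (hk : 0 < k) (hν : -k < ν) (r : ℕ) :
    kGamma k ((r + 1 : ℕ) * k + ν + k) = (r * k + ν + k) * kGamma k (r * k + ν + k) := by
  rw [← kGamma_add_self hk (natCast_mul_add_add_pos hk hν r).ne']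
  push_cast
  ring_nf

/-- The ratio of consecutive terms is `y / ((r + 1) (r k + ν + k))`, which tends to `0`. -/
lemma summable_pow_div_kGamma_mul_factorial (hk : 0 < k) (hν : -k < ν) (y : ℝ) :
    Summable fun r : ℕ => y ^ r / (kGamma k (r * k + ν + k) * r !) := by
  refine summable_of_ratio_norm_eventually_le (r := 1 / 2) (by norm_num) ?_
  have hlarge : ∀ᶠ r : ℕ in atTop, 2 * |y| ≤ (r + 1) * (ν + k) :=
    (tendsto_natCast_atTop_atTop.atTop_add tendsto_const_nhds |>.atTop_mul_const
      (by linarith)).eventually_ge_atTop _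
  filter_upwards [hlarge] with r hr
  have harg := natCast_mul_add_add_pos hk hν r
  have hΓ := kGamma_pos hk harg
  have hratio : y ^ (r + 1) / (kGamma k ((r + 1 : ℕ) * k + ν + k) * (r + 1)!) =
      y ^ r / (kGamma k (r * k + ν + k) * r !) * (y / ((r + 1) * (r * k + ν + k))) := by
    rw [kGamma_natCast_succ_mul hk hν, factorial_succ]
    push_cast
    field_simp
    ring
  rw [hratio, norm_mul, mul_comm]
  gcongr
  rw [norm_div, Real.norm_eq_abs, Real.norm_of_nonneg (by positivity),
    div_le_iff₀ (by positivity)]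
  have : (0 : ℝ) ≤ (r + 1) * (r * k) := by positivity
  linarith

lemma hasDerivAt_kBesselTerm (r : ℕ) {x : ℝ} (hx : 0 < x) :
    HasDerivAt (kBesselTerm k ν c r) (kBesselTermDeriv k ν c r x) x := by
  have hhalf : HasDerivAt (fun t : ℝ => t / 2) (1 / 2) x := (hasDerivAt_id x).div_const 2
  have hpow := (hasDerivAt_rpow_const (p := 2 * (r : ℝ) + ν / k)
    (Or.inl (by positivity))).comp x hhalf
  refine (hpow.const_mul ((-c) ^ r / (kGamma k (r * k + ν + k) * r !))).congr_deriv ?_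
  unfold kBesselTermDeriv
  ring

lemma hasSum_kBesselTerm (hk : 0 < k) (hν : -k < ν) {x : ℝ} (hx : 0 < x) :
    HasSum (kBesselTerm k ν c · x) (kBesselW k ν c x) := by
  have hx2 : 0 < x / 2 := by positivity
  refine (((summable_pow_div_kGamma_mul_factorial hk hν (-c * (x / 2) ^ 2)).mul_right
    ((x / 2) ^ (ν / k))).congr fun r => ?_).hasSum
  unfold kBesselTerm
  rw [rpow_two_mul_natCast_add hx2, mul_pow]
  ring

lemma norm_kBesselTermDeriv_le (hk : 0 < k) (hν : -k < ν) (r : ℕ) {x t : ℝ}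
    (hx : 0 < x) (ht : t ∈ Set.Ioo (x / 2) (2 * x)) :
    ‖kBesselTermDeriv k ν c r t‖ ≤ (3 * |c| * x ^ 2) ^ r / (kGamma k (r * k + ν + k) * r !) *
      ((|ν / k| + 1) / 2 * ((x / 4) ^ (ν / k - 1) + x ^ (ν / k - 1))) := by
  have ht2 : t / 2 ∈ Set.Icc (x / 4) x := ⟨by linarith [ht.1], by linarith [ht.2]⟩
  have ht2pos : 0 ≤ t / 2 := by linarith [ht2.1]
  have hpow : (t / 2) ^ (2 * (r : ℝ) + ν / k - 1) ≤
      (x ^ 2) ^ r * ((x / 4) ^ (ν / k - 1) + x ^ (ν / k - 1)) := by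
    rw [add_sub_assoc, rpow_two_mul_natCast_add (by linarith [ht2.1])]
    refine mul_le_mul (pow_le_pow_left₀ (by positivity) ?_ r)
      (rpow_le_rpow_add_rpow (by positivity) ht2 _) (rpow_nonneg ht2pos _) (by positivity)
    nlinarith [ht2.1, ht2.2]
  have hΓ := kGamma_pos hk (natCast_mul_add_add_pos hk hν r)
  calc ‖kBesselTermDeriv k ν c r t‖
      = |c| ^ r / (kGamma k (r * k + ν + k) * r !) *
          (|2 * r + ν / k| / 2 * (t / 2) ^ (2 * (r : ℝ) + ν / k - 1)) := by
        unfold kBesselTermDeriv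
        simp only [Real.norm_eq_abs, abs_mul, abs_div, abs_pow, abs_neg, abs_of_pos hΓ,
          Nat.abs_cast, abs_two, abs_of_nonneg (rpow_nonneg ht2pos _)]
    _ ≤ |c| ^ r / (kGamma k (r * k + ν + k) * r !) * (3 ^ r * (|ν / k| + 1) / 2 *
          ((x ^ 2) ^ r * ((x / 4) ^ (ν / k - 1) + x ^ (ν / k - 1)))) := by
        gcongr
        exact abs_two_mul_natCast_add_le r _
    _ = _ := by ring

lemma hasDerivAt_tsum_kBesselTermDeriv (hk : 0 < k) (hν : -k < ν) {x : ℝ} (hx : 0 < x) :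
    HasDerivAt (kBesselW k ν c) (∑' r, kBesselTermDeriv k ν c r x) x :=
  hasDerivAt_tsum_of_isPreconnected
    ((summable_pow_div_kGamma_mul_factorial hk hν _).mul_right _) isOpen_Ioo
    (convex_Ioo _ _).isPreconnected
    (fun r _ ht => hasDerivAt_kBesselTerm r (by linarith [ht.1]))
    (fun r _ ht => norm_kBesselTermDeriv_le hk hν r hx ht)
    (⟨by linarith, by linarith⟩ : x ∈ Set.Ioo (x / 2) (2 * x))
    (hasSum_kBesselTerm hk hν hx).summable ⟨by linarith, by linarith⟩

lemma kBesselTermDeriv_zero (hk : 0 < k) (hν : ν ≠ 0) (x : ℝ) :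
    kBesselTermDeriv k ν c 0 x = 1 / (2 * k) * kBesselTerm k (ν - k) c 0 x := by
  have hΓ : kGamma k (ν + k) = ν * kGamma k ν := kGamma_add_self hk hν
  have hexp : (ν - k) / k = ν / k - 1 := by field_simp
  unfold kBesselTermDeriv kBesselTerm
  simp only [Nat.cast_zero, zero_mul, zero_add, mul_zero, pow_zero, factorial_zero, Nat.cast_one,
    mul_one, sub_add_cancel, hΓ, hexp]
  field_simp

lemma kBesselTermDeriv_succ (hk : 0 < k) (hν : -k < ν) (r : ℕ) (x : ℝ) :
    kBesselTermDeriv k ν c (r + 1) x =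
      1 / (2 * k) * kBesselTerm k (ν - k) c (r + 1) x - c / 2 * kBesselTerm k (ν + k) c r x := by
  have hΓ₁ : kGamma k ((r + 1 : ℕ) * k + (ν - k) + k) = kGamma k (r * k + ν + k) := by
    push_cast
    ring_nf
  have hΓ₂ : kGamma k (r * k + (ν + k) + k) = kGamma k ((r + 1 : ℕ) * k + ν + k) := by
    push_cast
    ring_nf
  have he₁ : 2 * ((r + 1 : ℕ) : ℝ) + ν / k - 1 = 2 * r + 1 + ν / k := by push_cast; ring
  have he₂ : 2 * ((r + 1 : ℕ) : ℝ) + (ν - k) / k = 2 * r + 1 + ν / k := by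
    push_cast
    field_simp
    ring
  have he₃ : 2 * (r : ℝ) + (ν + k) / k = 2 * r + 1 + ν / k := by field_simp; ring
  have harg := natCast_mul_add_add_pos hk hν r
  have hΓpos := kGamma_pos hk harg
  unfold kBesselTermDeriv kBesselTerm
  rw [hΓ₁, hΓ₂, kGamma_natCast_succ_mul hk hν, he₁, he₂, he₃, factorial_succ]
  push_cast
  field_simp
  ring

/-- The `r`-th derivative term splits between the `r`-th term of `W_{ν-k}` and the `(r-1)`-st
term of `W_{ν+k}`. -/
lemma hasSum_kBesselTermDeriv (hk : 0 < k) (hν : 0 < ν) {x : ℝ} (hx : 0 < x) :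
    HasSum (kBesselTermDeriv k ν c · x)
      (1 / (2 * k) * kBesselW k (ν - k) c x - c / 2 * kBesselW k (ν + k) c x) := by
  have hlower : HasSum (fun r => kBesselTerm k (ν - k) c (r + 1) x)
      (kBesselW k (ν - k) c x - kBesselTerm k (ν - k) c 0 x) := by
    simpa using (hasSum_nat_add_iff' 1).mpr (hasSum_kBesselTerm hk (by linarith) hx)
  have hupper := hasSum_kBesselTerm (c := c) hk (by linarith : -k < ν + k) hx
  rw [← hasSum_nat_add_iff' 1]
  simp only [kBesselTermDeriv_succ hk (by linarith : -k < ν), range_one, sum_singleton,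
    kBesselTermDeriv_zero hk hν.ne']
  convert (hlower.mul_left (1 / (2 * k))).sub (hupper.mul_left (c / 2)) using 1
  ring

lemma hasDerivAt_kBesselW (hk : 0 < k) (hν : 0 < ν) {x : ℝ} (hx : 0 < x) :
    HasDerivAt (kBesselW k ν c)
      (1 / (2 * k) * kBesselW k (ν - k) c x - c / 2 * kBesselW k (ν + k) c x) x :=
  (hasDerivAt_tsum_kBesselTermDeriv hk (by linarith) hx).congr_deriv
    (hasSum_kBesselTermDeriv hk hν hx).tsum_eq

lemma hasDerivAt_sum_choose_kBesselW (hk : 0 < k) (m : ℕ) (hν : m * k < ν) {x : ℝ}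
    (hx : 0 < x) :
    HasDerivAt (fun y => ∑ n ∈ range (m + 1),
        (-1 : ℝ) ^ n * (m.choose n : ℝ) * c ^ n * k ^ n * kBesselW k (ν - m * k + 2 * n * k) c y)
      (1 / (2 * k) * ∑ n ∈ range (m + 2), (-1 : ℝ) ^ n * ((m + 1).choose n : ℝ) * c ^ n * k ^ n *
        kBesselW k (ν - (m + 1) * k + 2 * n * k) c x) x := by
  set F : ℕ → ℝ := fun n => kBesselW k (ν - (m + 1) * k + 2 * n * k) c x
  have hterm : ∀ n ∈ range (m + 1), HasDerivAt
      (fun y => (-1 : ℝ) ^ n * (m.choose n : ℝ) * c ^ n * k ^ n *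
        kBesselW k (ν - m * k + 2 * n * k) c y)
      ((-1 : ℝ) ^ n * (m.choose n : ℝ) * c ^ n * k ^ n *
        (1 / (2 * k) * F n - c / 2 * F (n + 1))) x := by
    intro n _
    have hμ : 0 < ν - m * k + 2 * n * k := by nlinarith [(n.cast_nonneg : (0 : ℝ) ≤ n)]
    have hlower : ν - m * k + 2 * n * k - k = ν - (m + 1) * k + 2 * n * k := by ring
    have hupper : ν - m * k + 2 * n * k + k = ν - (m + 1) * k + 2 * (n + 1 : ℕ) * k := by
      push_cast
      ring
    simp only [F, ← hlower, ← hupper]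
    exact (hasDerivAt_kBesselW hk hμ hx).const_mul _
  have hsign : ∀ n : ℕ, (-(c * k)) ^ n = (-1 : ℝ) ^ n * c ^ n * k ^ n := fun n => by
    rw [neg_eq_neg_one_mul, mul_pow, mul_pow, mul_assoc]
  refine (HasDerivAt.fun_sum hterm).congr_deriv ?_
  calc _ = 1 / (2 * k) * ∑ n ∈ range (m + 1),
        (m.choose n : ℝ) * (-(c * k)) ^ n * (F n - c * k * F (n + 1)) := by
        rw [mul_sum]
        refine sum_congr rfl fun n _ => ?_
        rw [hsign]
        field_simp
    _ = _ := by
        rw [sum_choose_mul_neg_pow_mul_sub]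
        congr 1
        refine sum_congr rfl fun n _ => ?_
        rw [hsign]
        ring

end

theorem kBessel_iteratedDeriv_general (k ν c : ℝ) (hk : 0 < k) (m : ℕ)
    (hν : ((m : ℝ) - 1) * k < ν) (x : ℝ) (hx : 0 < x) :
    iteratedDeriv m (kBesselW k ν c) x =
      1 / (2 ^ m * k ^ m) * ∑ n ∈ Finset.range (m + 1),
        (-1 : ℝ) ^ n * (m.choose n : ℝ) * c ^ n * k ^ n *
          kBesselW k (ν - m * k + 2 * n * k) c x := by
  induction m generalizing x with
  | zero => simp
  | succ m ih =>
    push_cast at hν ⊢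
    have hmk : (m : ℝ) * k < ν := by linarith
    have hlocal : iteratedDeriv m (kBesselW k ν c) =ᶠ[nhds x] fun y =>
        1 / (2 ^ m * k ^ m) * ∑ n ∈ range (m + 1),
          (-1 : ℝ) ^ n * (m.choose n : ℝ) * c ^ n * k ^ n * kBesselW k (ν - m * k + 2 * n * k) c y :=
      eventually_of_mem (isOpen_Ioi.mem_nhds hx) fun y hy => ih (by linarith) y hy
    rw [iteratedDeriv_succ, hlocal.deriv_eq,
      ((hasDerivAt_sum_choose_kBesselW hk m hmk hx).const_mul _).deriv, ← mul_assoc]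
    congr 1
    ring

theorem kBessel_iteratedDeriv (k ν c : ℝ) (hk : 0 < k) (m : ℕ) (hm : 0 < m)
    (hν : ((m : ℝ) - 1) * k < ν) (x : ℝ) (hx : 0 < x) :
    iteratedDeriv m (kBesselW k ν c) x =
      1 / (2 ^ m * k ^ m) * ∑ n ∈ Finset.range (m + 1),
        (-1 : ℝ) ^ n * (m.choose n : ℝ) * c ^ n * k ^ n *
          kBesselW k (ν - m * k + 2 * n * k) c x :=
  kBessel_iteratedDeriv_general k ν c hk m hν x hx
end
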